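/- arXiv:2004.15018 — 3 statements merged into one kernel-verified Lean document; each statement's English description precedes it below -/
import Mathlib

section
/- Let α > 0, m > 0, and let β₁, β₂ : ℝ → ℝ be continuous functions such that there is a constant c > 0 with c ≤ β₁(t) ≤ β₂(t) for all t ≥ 0, and such that β₁ is nonincreasing on [0,∞). Let (S₁, I₁, R₁) and (S₂, I₂, R₂) be solutions of the SIR system with transmission rates β₁ and β₂ respectively, with identical initial conditions S₁(0) = S₂(0) = S₀ > 0, I₁(0) = I₂(0) = I₀ > 0, R₁(0) = R₂(0) = R₀ ≥ 0 with S₀ + I₀ + R₀ = m. If S₁(t) → s₁ and S₂(t) → s₂ as t → ∞, then s₁ ≥ s₂. -/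
/-!
Write `D = S₁ - S₂` and `E = R₂ - R₁`. Conservation of `S + I + R` gives `I₁ - I₂ = E - D`, so
`E` relaxes towards `D` at rate `α`, and since `β₁ ≤ β₂` we get
`log S₂ - log S₁ ≤ (1/m) ∫₀ᵗ β₁ (E - D)`. Exchanging the order of integration turns the right
side into `(1/m) ∫₀ᵗ D(v) (κ(v) - β₁(v)) dv` with `0 ≤ κ ≤ β₁`, because `β₁` is nonincreasing;
hence it is at most `(β₁ 0 / m) ∫₀ᵗ (S₂ - S₁)⁺`. As `S₂ ≤ S₂ 0`, this bounds `(S₂ - S₁)⁺` by a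
multiple of its own integral, so Grönwall's inequality forces `S₂ ≤ S₁` on `[0, ∞)`, and the
limits inherit the inequality.
-/

/-- An SIR model with total population `m`, recovery rate `α`, and transmission
rate `β : ℝ → ℝ` consists of differentiable functions `S, I, R : ℝ → ℝ`
satisfying, for all `t ≥ 0`:
`I'(t) = β(t)·S(t)·I(t)/m − α·I(t)`, `S'(t) = −β(t)·S(t)·I(t)/m`, `R'(t) = α·I(t)`. -/
def IsSIR (α m : ℝ) (β S I R : ℝ → ℝ) : Prop :=
  Differentiable ℝ S ∧ Differentiable ℝ I ∧ Differentiable ℝ R ∧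
  ∀ t : ℝ, 0 ≤ t →
    deriv I t = β t * S t * I t / m - α * I t ∧
    deriv S t = -(β t * S t * I t / m) ∧
    deriv R t = α * I t

open Real Set intervalIntegral

lemma le_of_hasDerivAt_le_of_ge {f g f' g' : ℝ → ℝ} {a t : ℝ}
    (hf : ∀ x, a ≤ x → HasDerivAt f (f' x) x) (hg : ∀ x, a ≤ x → HasDerivAt g (g' x) x)
    (hfg : ∀ x, a ≤ x → f' x ≤ g' x) (ha : f a ≤ g a) (ht : a ≤ t) : f t ≤ g t :=
  image_le_of_deriv_right_le_deriv_boundary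
    (fun x hx => (hf x hx.1).continuousAt.continuousWithinAt)
    (fun x hx => (hf x hx.1).hasDerivWithinAt) ha
    (fun x hx => (hg x hx.1).continuousAt.continuousWithinAt)
    (fun x hx => (hg x hx.1).hasDerivWithinAt) (fun x hx => hfg x hx.1) ⟨ht, le_rfl⟩

lemma eq_of_hasDerivAt_eq_of_ge {f g f' : ℝ → ℝ} {a t : ℝ}
    (hf : ∀ x, a ≤ x → HasDerivAt f (f' x) x) (hg : ∀ x, a ≤ x → HasDerivAt g (f' x) x)
    (ha : f a = g a) (ht : a ≤ t) : f t = g t :=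
  le_antisymm (le_of_hasDerivAt_le_of_ge hf hg (fun _ _ => le_rfl) ha.le ht)
    (le_of_hasDerivAt_le_of_ge hg hf (fun _ _ => le_rfl) ha.ge ht)

-- `f * exp (-∫ g)` is constant, so `f` keeps the sign of `f a`.
lemma pos_of_hasDerivAt_eq_mul {f g : ℝ → ℝ} {a t : ℝ} (hg : Continuous g)
    (hf : ∀ x, a ≤ x → HasDerivAt f (g x * f x) x) (ha : 0 < f a) (ht : a ≤ t) : 0 < f t := by
  have hG x : HasDerivAt (fun y => ∫ v in a..y, g v) (g x) x :=
    (hg.integral_hasStrictDerivAt a x).hasDerivAt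
  have hconst : f t * exp (-∫ v in a..t, g v) = f a * exp (-∫ v in a..a, g v) :=
    eq_of_hasDerivAt_eq_of_ge (f := fun y => f y * exp (-∫ v in a..y, g v))
      (g := fun _ => f a * exp (-∫ v in a..a, g v)) (f' := fun _ => 0)
      (fun x hx => ((hf x hx).mul (hG x).neg.exp).congr_deriv (by ring))
      (fun x _ => hasDerivAt_const x _) rfl ht
  have := mul_pos ha (exp_pos (-∫ v in a..a, g v))
  rw [← hconst] at this
  exact pos_of_mul_pos_left this (exp_pos _).le

lemma exp_mul_eq_of_hasDerivAt_eq_mul_sub {D E : ℝ → ℝ} {α a t : ℝ} (hD : Continuous D)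
    (hE : ∀ x, a ≤ x → HasDerivAt E (α * (D x - E x)) x) (ht : a ≤ t) :
    exp (α * t) * E t = exp (α * a) * E a + α * ∫ w in a..t, exp (α * w) * D w := by
  have hcont : Continuous fun w => exp (α * w) * D w := by fun_prop
  refine eq_of_hasDerivAt_eq_of_ge (f := fun y => exp (α * y) * E y)
    (g := fun y => exp (α * a) * E a + α * ∫ w in a..y, exp (α * w) * D w)
    (f' := fun x => α * (exp (α * x) * D x))
    (fun x hx => ?_)
    (fun x _ => ((hcont.integral_hasStrictDerivAt a x).hasDerivAt.const_mul α).const_add _)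
    (by simp) ht
  have hexp : HasDerivAt (fun y => exp (α * y)) (exp (α * x) * α) x := by
    simpa using ((hasDerivAt_id x).const_mul α).exp
  exact (hexp.mul (hE x hx)).congr_deriv (by ring)

lemma integral_mul_integral_triangle {f g : ℝ → ℝ} (hf : Continuous f) (hg : Continuous g)
    (a b : ℝ) :
    ∫ v in a..b, g v * ∫ w in a..v, f w = ∫ v in a..b, f v * ∫ w in v..b, g w := by
  have parts := integral_mul_deriv_eq_deriv_mul
    (u := fun v => ∫ w in a..v, f w) (v := fun v => ∫ w in b..v, g w)
    (fun x _ => (hf.integral_hasStrictDerivAt a x).hasDerivAt)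
    (fun x _ => (hg.integral_hasStrictDerivAt b x).hasDerivAt)
    (hf.intervalIntegrable a b) (hg.intervalIntegrable a b)
  simp only [integral_same, mul_zero, zero_mul, sub_zero, zero_sub] at parts
  simp only [mul_comm (g _)]
  rw [parts, ← integral_neg]
  refine integral_congr fun v _ => ?_
  rw [integral_symm v b]
  ring

lemma integral_exp_neg_mul {α v t : ℝ} :
    ∫ w in v..t, α * exp (-(α * w)) = exp (-(α * v)) - exp (-(α * t)) := by
  rw [integral_eq_sub_of_hasDerivAt (f := fun w => -exp (-(α * w))) (fun x _ => ?_)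
    ((by fun_prop : Continuous fun w => α * exp (-(α * w))).intervalIntegrable v t)]
  · ring
  · exact (((hasDerivAt_id x).const_mul α).neg.exp).neg.congr_deriv (by simp [mul_comm])

lemma integral_mul_exp_neg_le {α v t : ℝ} {β : ℝ → ℝ} (hα : 0 ≤ α) (hβ : Continuous β)
    (hanti : AntitoneOn β (Icc v t)) (hvt : v ≤ t) :
    ∫ w in v..t, α * β w * exp (-(α * w)) ≤ β v * (exp (-(α * v)) - exp (-(α * t))) := by
  rw [← integral_exp_neg_mul, ← integral_const_mul]
  refine integral_mono_on hvt ((by fun_prop : Continuous _).intervalIntegrable v t)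
    ((by fun_prop : Continuous _).intervalIntegrable v t) fun w hw => ?_
  have := mul_le_mul_of_nonneg_right (hanti ⟨le_rfl, hvt⟩ hw hw.1)
    (mul_nonneg hα (exp_pos (-(α * w))).le)
  linarith

lemma mul_le_posPart_neg_mul {d x B : ℝ} (hB : -B ≤ x) (hx : x ≤ 0) : d * x ≤ (-d)⁺ * B := by
  rcases le_total 0 d with hd | hd
  · rw [posPart_of_nonpos (by linarith)]
    nlinarith
  · rw [posPart_of_nonneg (by linarith)]
    nlinarith

lemma integral_mul_smoothing_sub_le {α t : ℝ} {β D E : ℝ → ℝ} (hα : 0 ≤ α) (hβ : Continuous β)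
    (hβ0 : ∀ x, 0 ≤ x → 0 ≤ β x) (hanti : AntitoneOn β (Ici 0)) (hD : Continuous D)
    (hE : ∀ x, 0 ≤ x → HasDerivAt E (α * (D x - E x)) x) (hE0 : E 0 = 0) (ht : 0 ≤ t) :
    ∫ v in 0..t, β v * (E v - D v) ≤ β 0 * ∫ v in 0..t, (-D v)⁺ := by
  set F := fun v => ∫ w in 0..v, exp (α * w) * D w
  set κ := fun v => exp (α * v) * ∫ w in v..t, α * β w * exp (-(α * w))
  have hEF : ∀ v ∈ uIcc 0 t,
      β v * (E v - D v) = α * β v * exp (-(α * v)) * F v - β v * D v := by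
    intro v hv
    have hsmooth := exp_mul_eq_of_hasDerivAt_eq_mul_sub hD hE (uIcc_of_le ht ▸ hv).1
    rw [hE0, mul_zero, zero_add] at hsmooth
    have : E v = exp (-(α * v)) * (α * F v) := by
      rw [← hsmooth, ← mul_assoc, ← exp_add]; simp
    rw [this]; ring
  have hswap : ∫ v in 0..t, α * β v * exp (-(α * v)) * F v = ∫ v in 0..t, D v * κ v := by
    rw [integral_mul_integral_triangle (f := fun w => exp (α * w) * D w)
      (g := fun v => α * β v * exp (-(α * v))) (by fun_prop) (by fun_prop)]
    refine integral_congr fun v _ => ?_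
    simp only [κ]; ring
  have hκ : ∀ v ∈ Icc 0 t, -β 0 ≤ κ v - β v ∧ κ v - β v ≤ 0 := by
    intro v hv
    have hβv := hβ0 v hv.1
    have hint0 : 0 ≤ ∫ w in v..t, α * β w * exp (-(α * w)) :=
      integral_nonneg hv.2 fun w hw => by have := hβ0 w (hv.1.trans hw.1); positivity
    have hint := integral_mul_exp_neg_le hα hβ (hanti.mono fun w hw => hv.1.trans hw.1) hv.2
    have hexp : exp (α * v) * (β v * (exp (-(α * v)) - exp (-(α * t)))) ≤ β v := by
      have : exp (α * v) * exp (-(α * v)) = 1 := by rw [← exp_add]; simp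
      nlinarith [mul_nonneg (mul_nonneg (exp_pos (α * v)).le hβv) (exp_pos (-(α * t))).le]
    constructor
    · have : 0 ≤ κ v := mul_nonneg (exp_pos _).le hint0
      linarith [hanti (mem_Ici.2 le_rfl) hv.1 hv.1]
    · have : κ v ≤ β v := (mul_le_mul_of_nonneg_left hint (exp_pos _).le).trans hexp
      linarith
  have hFc : Continuous F := by fun_prop
  have hκc : Continuous κ := by
    have hint : Continuous fun v => ∫ w in v..t, α * β w * exp (-(α * w)) := by
      rw [show (fun v => ∫ w in v..t, α * β w * exp (-(α * w))) =
        fun v => -∫ w in t..v, α * β w * exp (-(α * w)) from funext fun v => integral_symm t v]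
      fun_prop
    exact (by fun_prop : Continuous fun v => exp (α * v)).mul hint
  calc ∫ v in 0..t, β v * (E v - D v)
      = ∫ v in 0..t, (α * β v * exp (-(α * v)) * F v - β v * D v) := integral_congr hEF
    _ = (∫ v in 0..t, α * β v * exp (-(α * v)) * F v) - ∫ v in 0..t, β v * D v :=
      integral_sub (Continuous.intervalIntegrable (by fun_prop) 0 t)
        (Continuous.intervalIntegrable (by fun_prop) 0 t)
    _ = ∫ v in 0..t, (D v * κ v - β v * D v) := by
      rw [hswap, integral_sub (Continuous.intervalIntegrable (by fun_prop) 0 t)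
        (Continuous.intervalIntegrable (by fun_prop) 0 t)]
    _ = ∫ v in 0..t, D v * (κ v - β v) := integral_congr fun v _ => by ring
    _ ≤ ∫ v in 0..t, (-D v)⁺ * β 0 :=
      integral_mono_on ht (Continuous.intervalIntegrable (by fun_prop) 0 t)
        (((continuous_posPart.comp hD.neg).mul continuous_const).intervalIntegrable 0 t)
        fun v hv => mul_le_posPart_neg_mul (hκ v hv).1 (hκ v hv).2
    _ = β 0 * ∫ v in 0..t, (-D v)⁺ := by rw [integral_mul_const, mul_comm]

lemma posPart_sub_le_mul_of_log_sub_le {x y M L : ℝ} (hx : 0 < x) (hy : 0 < y) (hyM : y ≤ M)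
    (hL : 0 ≤ L) (hlog : log y - log x ≤ L) : (y - x)⁺ ≤ M * L := by
  rcases le_total y x with hxy | hxy
  · rw [posPart_of_nonpos (sub_nonpos.2 hxy)]
    exact mul_nonneg (hy.le.trans hyM) hL
  · rw [posPart_of_nonneg (sub_nonneg.2 hxy)]
    have hquot := log_le_sub_one_of_pos (div_pos hx hy)
    rw [log_div hx.ne' hy.ne', div_sub_one hy.ne', le_div_iff₀ hy] at hquot
    have hmono := log_le_log hx hxy
    nlinarith [mul_le_mul_of_nonneg_right hyM (sub_nonneg.2 hmono)]

lemma eq_zero_of_le_mul_integral {p : ℝ → ℝ} {K t : ℝ} (hp : Continuous p)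
    (hp0 : ∀ x, 0 ≤ x → 0 ≤ p x) (hpK : ∀ x, 0 ≤ x → p x ≤ K * ∫ v in 0..x, p v) (ht : 0 ≤ t) :
    p t = 0 := by
  have hQ : ∀ x, 0 ≤ x → 0 ≤ ∫ v in 0..x, p v := fun x hx =>
    integral_nonneg hx fun v hv => hp0 v hv.1
  have hQ0 := eq_zero_of_abs_deriv_le_mul_abs_self_of_eq_zero_right (K := K) (a := 0) (b := t)
    (f := fun x => ∫ v in 0..x, p v) (f' := p) (by fun_prop)
    (fun x _ => (hp.integral_hasStrictDerivAt 0 x).hasDerivAt.hasDerivWithinAt) integral_same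
    (fun x hx => by
      rw [Real.norm_of_nonneg (hp0 x hx.1), Real.norm_of_nonneg (hQ x hx.1)]
      exact hpK x hx.1) t ⟨ht, le_rfl⟩
  have := hpK t ht
  rw [hQ0, mul_zero] at this
  exact le_antisymm this (hp0 t ht)

namespace IsSIR

variable {α m : ℝ} {β S I R : ℝ → ℝ} {t : ℝ}

lemma hasDerivAt_S (h : IsSIR α m β S I R) (ht : 0 ≤ t) :
    HasDerivAt S (-(β t * S t * I t / m)) t :=
  (h.2.2.2 t ht).2.1 ▸ (h.1 t).hasDerivAt

lemma hasDerivAt_I (h : IsSIR α m β S I R) (ht : 0 ≤ t) :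
    HasDerivAt I (β t * S t * I t / m - α * I t) t :=
  (h.2.2.2 t ht).1 ▸ (h.2.1 t).hasDerivAt

lemma hasDerivAt_R (h : IsSIR α m β S I R) (ht : 0 ≤ t) : HasDerivAt R (α * I t) t :=
  (h.2.2.2 t ht).2.2 ▸ (h.2.2.1 t).hasDerivAt

lemma S_add_I_add_R (h : IsSIR α m β S I R) (ht : 0 ≤ t) :
    S t + I t + R t = S 0 + I 0 + R 0 :=
  eq_of_hasDerivAt_eq_of_ge (f := fun x => S x + I x + R x) (g := fun _ => S 0 + I 0 + R 0)
    (f' := fun _ => 0)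
    (fun _ hx => (((h.hasDerivAt_S hx).add (h.hasDerivAt_I hx)).add (h.hasDerivAt_R hx)).congr_deriv
      (by ring))
    (fun x _ => hasDerivAt_const x _) rfl ht

lemma I_pos (h : IsSIR α m β S I R) (hβ : Continuous β) (hI : 0 < I 0) (ht : 0 ≤ t) :
    0 < I t :=
  have := h.1.continuous
  pos_of_hasDerivAt_eq_mul (g := fun x => β x * S x / m - α) (by fun_prop)
    (fun _ hx => (h.hasDerivAt_I hx).congr_deriv (by ring)) hI ht

lemma S_pos (h : IsSIR α m β S I R) (hβ : Continuous β) (hS : 0 < S 0) (ht : 0 ≤ t) :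
    0 < S t :=
  have := h.2.1.continuous
  pos_of_hasDerivAt_eq_mul (g := fun x => -(β x * I x / m)) (by fun_prop)
    (fun _ hx => (h.hasDerivAt_S hx).congr_deriv (by ring)) hS ht

lemma S_le_S_zero (h : IsSIR α m β S I R) (hm : 0 ≤ m) (hβ : ∀ x, 0 ≤ x → 0 ≤ β x)
    (hS : ∀ x, 0 ≤ x → 0 ≤ S x) (hI : ∀ x, 0 ≤ x → 0 ≤ I x) (ht : 0 ≤ t) : S t ≤ S 0 :=
  le_of_hasDerivAt_le_of_ge (g := fun _ => S 0) (fun _ hx => h.hasDerivAt_S hx)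
    (fun x _ => hasDerivAt_const x _)
    (fun x hx => neg_nonpos.2 <|
      div_nonneg (mul_nonneg (mul_nonneg (hβ x hx) (hS x hx)) (hI x hx)) hm)
    le_rfl ht

section Comparison

variable {β₁ β₂ S₁ I₁ R₁ S₂ I₂ R₂ : ℝ → ℝ}

lemma I_sub_I_eq (h₁ : IsSIR α m β₁ S₁ I₁ R₁) (h₂ : IsSIR α m β₂ S₂ I₂ R₂) (hS0 : S₁ 0 = S₂ 0)
    (hI0 : I₁ 0 = I₂ 0) (hR0 : R₁ 0 = R₂ 0) (ht : 0 ≤ t) :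
    I₁ t - I₂ t = (R₂ t - R₁ t) - (S₁ t - S₂ t) := by
  linarith [h₁.S_add_I_add_R ht, h₂.S_add_I_add_R ht]

lemma log_S_sub_log_S_le (h₁ : IsSIR α m β₁ S₁ I₁ R₁) (h₂ : IsSIR α m β₂ S₂ I₂ R₂) (hm : 0 ≤ m)
    (hβ₁ : Continuous β₁) (hle : ∀ x, 0 ≤ x → β₁ x ≤ β₂ x) (hS₁ : ∀ x, 0 ≤ x → 0 < S₁ x)
    (hS₂ : ∀ x, 0 ≤ x → 0 < S₂ x) (hI₂ : ∀ x, 0 ≤ x → 0 ≤ I₂ x) (hS0 : S₁ 0 = S₂ 0)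
    (ht : 0 ≤ t) :
    log (S₂ t) - log (S₁ t) ≤ ∫ v in 0..t, β₁ v * (I₁ v - I₂ v) / m := by
  have hcont : Continuous fun v => β₁ v * (I₁ v - I₂ v) / m := by
    have := h₁.2.1.continuous
    have := h₂.2.1.continuous
    fun_prop
  refine le_of_hasDerivAt_le_of_ge (f := fun x => log (S₂ x) - log (S₁ x))
    (g := fun x => ∫ v in 0..x, β₁ v * (I₁ v - I₂ v) / m)
    (f' := fun x => β₁ x * I₁ x / m - β₂ x * I₂ x / m)
    (fun x hx => ?_) (fun x _ => (hcont.integral_hasStrictDerivAt 0 x).hasDerivAt)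
    (fun x hx => ?_) (by simp [hS0]) ht
  · have h₁S := (hS₁ x hx).ne'
    have h₂S := (hS₂ x hx).ne'
    refine (((h₂.hasDerivAt_S hx).log h₂S).sub ((h₁.hasDerivAt_S hx).log h₁S)).congr_deriv ?_
    field_simp
    ring
  · have : 0 ≤ (β₂ x - β₁ x) * I₂ x / m :=
      div_nonneg (mul_nonneg (sub_nonneg.2 (hle x hx)) (hI₂ x hx)) hm
    have : β₁ x * (I₁ x - I₂ x) / m - (β₁ x * I₁ x / m - β₂ x * I₂ x / m) =
        (β₂ x - β₁ x) * I₂ x / m := by ring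
    linarith

theorem S_le_S_of_transmission_le (h₁ : IsSIR α m β₁ S₁ I₁ R₁) (h₂ : IsSIR α m β₂ S₂ I₂ R₂)
    (hα : 0 ≤ α) (hm : 0 < m) (hβ₁ : Continuous β₁) (hβ₂ : Continuous β₂)
    (hβ₁0 : ∀ x, 0 ≤ x → 0 ≤ β₁ x) (hle : ∀ x, 0 ≤ x → β₁ x ≤ β₂ x) (hanti : AntitoneOn β₁ (Ici 0))
    (hS0 : S₁ 0 = S₂ 0) (hS0pos : 0 < S₂ 0) (hI0 : I₁ 0 = I₂ 0) (hI0pos : 0 < I₂ 0)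
    (hR0 : R₁ 0 = R₂ 0) (ht : 0 ≤ t) : S₂ t ≤ S₁ t := by
  have hS₁ : ∀ x, 0 ≤ x → 0 < S₁ x := fun _ hx => h₁.S_pos hβ₁ (hS0 ▸ hS0pos) hx
  have hS₂ : ∀ x, 0 ≤ x → 0 < S₂ x := fun _ hx => h₂.S_pos hβ₂ hS0pos hx
  have hI₂ : ∀ x, 0 ≤ x → 0 ≤ I₂ x := fun _ hx => (h₂.I_pos hβ₂ hI0pos hx).le
  have hS₂le : ∀ x, 0 ≤ x → S₂ x ≤ S₂ 0 := fun _ hx =>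
    h₂.S_le_S_zero hm.le (fun y hy => (hβ₁0 y hy).trans (hle y hy)) (fun y hy => (hS₂ y hy).le)
      hI₂ hx
  have hlog : ∀ x, 0 ≤ x →
      log (S₂ x) - log (S₁ x) ≤ β₁ 0 / m * ∫ v in 0..x, (S₂ v - S₁ v)⁺ := fun x hx =>
    calc log (S₂ x) - log (S₁ x) ≤ ∫ v in 0..x, β₁ v * (I₁ v - I₂ v) / m :=
          h₁.log_S_sub_log_S_le h₂ hm.le hβ₁ hle hS₁ hS₂ hI₂ hS0 hx
      _ = (∫ v in 0..x, β₁ v * ((R₂ v - R₁ v) - (S₁ v - S₂ v))) / m := by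
          rw [← integral_div]
          refine integral_congr fun v hv => ?_
          rw [h₁.I_sub_I_eq h₂ hS0 hI0 hR0 (uIcc_of_le hx ▸ hv).1]
      _ ≤ β₁ 0 * (∫ v in 0..x, (-(S₁ v - S₂ v))⁺) / m := by
          refine div_le_div_of_nonneg_right (integral_mul_smoothing_sub_le hα hβ₁ hβ₁0 hanti
            (h₁.1.continuous.sub h₂.1.continuous) (fun y hy => ?_) (by simp [hR0]) hx) hm.le
          exact ((h₂.hasDerivAt_R hy).sub (h₁.hasDerivAt_R hy)).congr_deriv
            (by rw [← mul_sub, ← neg_sub (I₁ y), h₁.I_sub_I_eq h₂ hS0 hI0 hR0 hy]; ring)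
      _ = β₁ 0 / m * ∫ v in 0..x, (S₂ v - S₁ v)⁺ := by simp only [neg_sub]; ring
  have hgap : ∀ x, 0 ≤ x → (S₂ x - S₁ x)⁺ ≤ S₂ 0 * β₁ 0 / m * ∫ v in 0..x, (S₂ v - S₁ v)⁺ :=
    fun x hx => by
      rw [mul_div_assoc, mul_assoc]
      exact posPart_sub_le_mul_of_log_sub_le (hS₁ x hx) (hS₂ x hx) (hS₂le x hx)
        (mul_nonneg (div_nonneg (hβ₁0 0 le_rfl) hm.le)
          (integral_nonneg hx fun _ _ => posPart_nonneg _)) (hlog x hx)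
  exact sub_nonpos.1 <| posPart_eq_zero.1 <|
    eq_zero_of_le_mul_integral (p := fun v => (S₂ v - S₁ v)⁺)
    (continuous_posPart.comp (h₂.1.continuous.sub h₁.1.continuous))
    (fun _ _ => posPart_nonneg _) hgap ht

end Comparison

end IsSIR

theorem stmt_0_general (α m c : ℝ) (hα : 0 < α) (hm : 0 < m) (hc : 0 < c)
    (β₁ β₂ : ℝ → ℝ) (hβ₁c : Continuous β₁) (hβ₂c : Continuous β₂)
    (hlb : ∀ t : ℝ, 0 ≤ t → c ≤ β₁ t)
    (hle : ∀ t : ℝ, 0 ≤ t → β₁ t ≤ β₂ t)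
    (hmono : AntitoneOn β₁ (Set.Ici (0 : ℝ)))
    (S₁ I₁ R₁ S₂ I₂ R₂ : ℝ → ℝ)
    (h₁ : IsSIR α m β₁ S₁ I₁ R₁) (h₂ : IsSIR α m β₂ S₂ I₂ R₂)
    (S₀ I₀ R₀ : ℝ) (hS₀ : 0 < S₀) (hI₀ : 0 < I₀)
    (hS₁0 : S₁ 0 = S₀) (hS₂0 : S₂ 0 = S₀)
    (hI₁0 : I₁ 0 = I₀) (hI₂0 : I₂ 0 = I₀)
    (hR₁0 : R₁ 0 = R₀) (hR₂0 : R₂ 0 = R₀)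
    (s₁ s₂ : ℝ)
    (hlim₁ : Filter.Tendsto S₁ Filter.atTop (nhds s₁))
    (hlim₂ : Filter.Tendsto S₂ Filter.atTop (nhds s₂)) :
    s₂ ≤ s₁ :=
  le_of_tendsto_of_tendsto hlim₂ hlim₁ <| Filter.eventually_atTop.2 ⟨0, fun _ ht =>
    h₁.S_le_S_of_transmission_le h₂ hα.le hm hβ₁c hβ₂c (fun x hx => hc.le.trans (hlb x hx)) hle
      hmono (hS₁0.trans hS₂0.symm) (hS₂0 ▸ hS₀) (hI₁0.trans hI₂0.symm) (hI₂0 ▸ hI₀)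
      (hR₁0.trans hR₂0.symm) ht⟩

theorem stmt_0 (α m c : ℝ) (hα : 0 < α) (hm : 0 < m) (hc : 0 < c)
    (β₁ β₂ : ℝ → ℝ) (hβ₁c : Continuous β₁) (hβ₂c : Continuous β₂)
    (hlb : ∀ t : ℝ, 0 ≤ t → c ≤ β₁ t)
    (hle : ∀ t : ℝ, 0 ≤ t → β₁ t ≤ β₂ t)
    (hmono : AntitoneOn β₁ (Set.Ici (0 : ℝ)))
    (S₁ I₁ R₁ S₂ I₂ R₂ : ℝ → ℝ)
    (h₁ : IsSIR α m β₁ S₁ I₁ R₁) (h₂ : IsSIR α m β₂ S₂ I₂ R₂)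
    (S₀ I₀ R₀ : ℝ) (hS₀ : 0 < S₀) (hI₀ : 0 < I₀) (hR₀ : 0 ≤ R₀)
    (hsum : S₀ + I₀ + R₀ = m)
    (hS₁0 : S₁ 0 = S₀) (hS₂0 : S₂ 0 = S₀)
    (hI₁0 : I₁ 0 = I₀) (hI₂0 : I₂ 0 = I₀)
    (hR₁0 : R₁ 0 = R₀) (hR₂0 : R₂ 0 = R₀)
    (s₁ s₂ : ℝ)
    (hlim₁ : Filter.Tendsto S₁ Filter.atTop (nhds s₁))
    (hlim₂ : Filter.Tendsto S₂ Filter.atTop (nhds s₂)) :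
    s₂ ≤ s₁ :=
  stmt_0_general α m c hα hm hc β₁ β₂ hβ₁c hβ₂c hlb hle hmono S₁ I₁ R₁ S₂ I₂ R₂ h₁ h₂ S₀ I₀ R₀ hS₀
    hI₀ hS₁0 hS₂0 hI₁0 hI₂0 hR₁0 hR₂0 s₁ s₂ hlim₁ hlim₂
end

section
/- Let α > 0, m = 1, and let β > 0 be a constant. Let (S, I, R) be a solution of the SIR system with constant transmission rate β, with S(0) > 0 and S(0) + I(0) + R(0) = 1. Suppose that as t → ∞ we have I(t) → 0 and R(t) → R∞ for some real number R∞. Then R∞ = 1 − S(0)·exp(−(β/α)·(R∞ − R(0))). -/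
/-! Along a solution `S + I + R` is constant, and since `S' = -(β / (α m)) R' S`, so is
`S t · exp ((β / (α m)) (R t - R 0))`. Letting `t → ∞` with `I → 0`, the first invariant gives
`S → 1 - R∞` and the second `S → S 0 · exp (-(β / α) (R∞ - R 0))`. -/

open Real Filter Topology

theorem eq_of_hasDerivAt_zero_of_nonneg {f : ℝ → ℝ} (hf : ∀ t, 0 ≤ t → HasDerivAt f 0 t)
    {t : ℝ} (ht : 0 ≤ t) : f t = f 0 :=
  constant_of_has_deriv_right_zero (fun x hx => (hf x hx.1).continuousAt.continuousWithinAt)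
    (fun x hx => (hf x hx.1).hasDerivWithinAt) t ⟨ht, le_rfl⟩

namespace IsSIR

variable {α m : ℝ} {S I R : ℝ → ℝ}

theorem population_eq {β : ℝ → ℝ} (h : IsSIR α m β S I R) {t : ℝ} (ht : 0 ≤ t) :
    S t + I t + R t = S 0 + I 0 + R 0 := by
  obtain ⟨hS, hI, hR, hode⟩ := h
  refine eq_of_hasDerivAt_zero_of_nonneg (f := fun t => S t + I t + R t) (fun t ht => ?_) ht
  obtain ⟨hI', hS', hR'⟩ := hode t ht
  refine (((hS t).hasDerivAt.add (hI t).hasDerivAt).add (hR t).hasDerivAt).congr_deriv ?_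
  rw [hS', hI', hR']
  ring

theorem susceptible_eq {β : ℝ} (h : IsSIR α m (fun _ => β) S I R) (hα : α ≠ 0) {t : ℝ}
    (ht : 0 ≤ t) : S t = S 0 * exp (-(β / (α * m)) * (R t - R 0)) := by
  obtain ⟨hS, -, hR, hode⟩ := h
  set c := β / (α * m)
  have hinv : ∀ t, 0 ≤ t → HasDerivAt (fun t => S t * exp (c * (R t - R 0))) 0 t := by
    intro t ht
    obtain ⟨-, hS', hR'⟩ := hode t ht
    refine ((hS t).hasDerivAt.mul ((((hR t).hasDerivAt.sub_const (R 0)).const_mul c).exp))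
      |>.congr_deriv ?_
    rw [hS', hR']
    simp only [c]
    by_cases hm : m = 0
    · simp [hm]
    · field_simp
      ring
  have key := eq_of_hasDerivAt_zero_of_nonneg hinv ht
  simp only [sub_self, mul_zero, exp_zero, mul_one] at key
  rw [neg_mul, exp_neg, ← key, mul_inv_cancel_right₀ (exp_ne_zero _)]

end IsSIR

theorem stmt_4_general (α β : ℝ) (hα : 0 < α)
    (S I R : ℝ → ℝ) (h : IsSIR α 1 (fun _ => β) S I R)
    (hsum : S 0 + I 0 + R 0 = 1)
    (Rinf : ℝ)
    (hI : Filter.Tendsto I Filter.atTop (nhds 0))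
    (hR : Filter.Tendsto R Filter.atTop (nhds Rinf)) :
    Rinf = 1 - S 0 * Real.exp (-(β / α) * (Rinf - R 0)) := by
  have hS_sum : Tendsto S atTop (𝓝 (1 - 0 - Rinf)) := by
    refine ((hI.const_sub 1).sub hR).congr' ?_
    filter_upwards [eventually_ge_atTop 0] with t ht
    linarith [h.population_eq ht]
  have hS_exp : Tendsto S atTop (𝓝 (S 0 * exp (-(β / α) * (Rinf - R 0)))) := by
    refine (((continuous_exp.tendsto _).comp ((hR.sub_const (R 0)).const_mul _)).const_mul
      (S 0)).congr' ?_
    filter_upwards [eventually_ge_atTop 0] with t ht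
    simpa using (h.susceptible_eq hα.ne' ht).symm
  linarith [tendsto_nhds_unique hS_sum hS_exp]

theorem stmt_4 (α β : ℝ) (hα : 0 < α) (hβ : 0 < β)
    (S I R : ℝ → ℝ) (h : IsSIR α 1 (fun _ => β) S I R)
    (hS0 : 0 < S 0) (hsum : S 0 + I 0 + R 0 = 1)
    (Rinf : ℝ)
    (hI : Filter.Tendsto I Filter.atTop (nhds 0))
    (hR : Filter.Tendsto R Filter.atTop (nhds Rinf)) :
    Rinf = 1 - S 0 * Real.exp (-(β / α) * (Rinf - R 0)) :=
  stmt_4_general α β hα S I R h hsum Rinf hI hR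
end

section
/- Let s₀ ∈ (0,1) and let 0 < ρ₁ ≤ ρ₂. If x₁ > 0 satisfies x₁ = 1 − s₀·exp(−ρ₁·x₁) and x₂ > 0 satisfies x₂ = 1 − s₀·exp(−ρ₂·x₂), then x₁ ≤ x₂. That is, the unique positive solution of the final-size equation is monotone nondecreasing as a function of ρ. -/
theorem stmt_6 (s₀ ρ₁ ρ₂ : ℝ) (hs₀ : s₀ ∈ Set.Ioo (0 : ℝ) 1)
    (hρ₁ : 0 < ρ₁) (hρ : ρ₁ ≤ ρ₂)
    (x₁ x₂ : ℝ) (hx₁pos : 0 < x₁) (hx₂pos : 0 < x₂)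
    (hx₁ : x₁ = 1 - s₀ * Real.exp (-ρ₁ * x₁))
    (hx₂ : x₂ = 1 - s₀ * Real.exp (-ρ₂ * x₂)) :
    x₁ ≤ x₂ := by
  obtain ⟨hs0, hs1⟩ := hs₀
  by_contra hlt
  push_neg at hlt
  set t : ℝ := x₂ / x₁ with ht
  have htpos : 0 < t := div_pos hx₂pos hx₁pos
  have htlt : t < 1 := (div_lt_one hx₁pos).mpr hlt
  have htx : t * x₁ = x₂ := div_mul_cancel₀ x₂ (ne_of_gt hx₁pos)
  have hne : -ρ₂ * x₁ ≠ (0 : ℝ) := by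
    have : 0 < ρ₂ * x₁ := mul_pos (lt_of_lt_of_le hρ₁ hρ) hx₁pos
    nlinarith
  have hconv := strictConvexOn_exp.2 (Set.mem_univ (-ρ₂ * x₁)) (Set.mem_univ (0 : ℝ))
    hne htpos (by linarith : (0:ℝ) < 1 - t) (by ring)
  simp only [smul_eq_mul, mul_zero, add_zero, Real.exp_zero, mul_one] at hconv
  have harg : t * (-ρ₂ * x₁) = -ρ₂ * x₂ := by rw [← htx]; ring
  rw [harg] at hconv
  -- exp(-ρ₂ x₂) < t * exp(-ρ₂ x₁) + (1 - t)
  have hmono : Real.exp (-ρ₂ * x₁) ≤ Real.exp (-ρ₁ * x₁) := by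
    apply Real.exp_le_exp.mpr
    nlinarith
  -- x₂ = 1 - s₀ exp(-ρ₂ x₂) > 1 - s₀ (t exp(-ρ₂ x₁) + 1 - t)
  --    = t (1 - s₀ exp(-ρ₂ x₁)) + (1-t)(1-s₀) ≥ t x₁ + (1-t)(1-s₀)
  have hx1le : x₁ ≤ 1 - s₀ * Real.exp (-ρ₂ * x₁) := by
    nlinarith [hx₁, hmono, hs0.le, mul_le_mul_of_nonneg_left hmono hs0.le]
  nlinarith [mul_pos htpos hx₁pos]
end
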